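/- Let X be a compact metric space, let 𝒞 and 𝒟 be families of subsets of X, let (P^ν_𝒞) and (P^ν_𝒟) be the optimal derivation sequences for 𝒞 and 𝒟 respectively, and let (Q^ν) be the optimal derivation sequence for the family {C ∩ D : C ∈ 𝒞, D ∈ 𝒟}. Then for all ordinals ν and μ, Q^{ν # μ} ⊆ P^ν_𝒞 ∪ P^μ_𝒟. -/

import Mathlib

/-- The optimal derivation sequence for a family `𝒞` of subsets of `X`:
`P^0 = X`, `P^{ν+1} = P^ν \ ⋃{U open : ∃ C ∈ 𝒞, P^ν ∩ U ⊆ C}`, and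
`P^λ = ⋂_{μ<λ} P^μ` at limits. -/
noncomputable def optDeriv {X : Type} [TopologicalSpace X] (𝒞 : Set (Set X))
    (ν : Ordinal.{0}) : Set X :=
  Ordinal.limitRecOn ν Set.univ
    (fun _ P => P \ ⋃₀ {U : Set X | IsOpen U ∧ ∃ C ∈ 𝒞, P ∩ U ⊆ C})
    (fun o _ ih => ⋂ (μ : {μ : Ordinal.{0} // μ < o}), ih μ.1 μ.2)

universe u

namespace Ordinal

/-- Natural (Hessenberg) sum of ordinals, as in the former `Mathlib.SetTheory.Ordinal.NaturalOps`. -/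
noncomputable def nadd : Ordinal.{u} → Ordinal.{u} → Ordinal.{u}
  | a, b =>
    max (⨆ x : Set.Iio a, Order.succ (nadd x.1 b)) (⨆ x : Set.Iio b, Order.succ (nadd a x.1))
termination_by a b => (a, b)
decreasing_by all_goals cases x; decreasing_tactic

end Ordinal

namespace NaturalOps

scoped infixl:65 " ♯ " => Ordinal.nadd

end NaturalOps

/-!
Write `P^ν`, `R^μ` and `Q^ξ` for the derivation sequences of `𝒞`, `𝒟` and `{C ∩ D}`. By
induction on `(ν, μ)`, lexicographically: a point `x` outside `P^ν ∪ R^μ` is removed at some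
stage `ν₁ < ν` of the first sequence by an open `U` with `P^{ν₁} ∩ U ⊆ C`, and at some stage
`μ₁ < μ` of the second by an open `V` with `R^{μ₁} ∩ V ⊆ D`. With `β = ν₁ ♯ μ₁`, the induction
hypothesis for `(ν₁ + 1, μ₁)` and `(ν₁, μ₁ + 1)`, whose natural sums are both `β + 1`, gives
`Q^{β+1} ∩ U ∩ V ⊆ C ∩ D`, so `x ∉ Q^{β+2}`, and `β + 2 = (ν₁ + 1) ♯ (μ₁ + 1) ≤ ν ♯ μ`.
-/

open scoped NaturalOps

namespace Ordinal

theorem nadd_comm (a b : Ordinal.{u}) : a ♯ b = b ♯ a := by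
  induction a using WellFoundedLT.induction generalizing b with
  | _ a iha =>
  induction b using WellFoundedLT.induction with
  | _ b ihb =>
  rw [nadd.eq_1 a, nadd.eq_1 b, max_comm]
  congr 1
  · exact iSup_congr fun y => by rw [ihb y.1 y.2]
  · exact iSup_congr fun x => by rw [iha x.1 x.2]

theorem nadd_lt_nadd_right {a a' : Ordinal.{u}} (h : a < a') (b : Ordinal.{u}) :
    a ♯ b < a' ♯ b := by
  conv_rhs => rw [nadd]
  refine (Order.lt_succ _).trans_le (le_max_of_le_left ?_)
  exact Ordinal.le_iSup (fun x : Set.Iio a' => Order.succ (x.1 ♯ b)) ⟨a, h⟩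

theorem nadd_lt_nadd_left (a : Ordinal.{u}) {b b' : Ordinal.{u}} (h : b < b') :
    a ♯ b < a ♯ b' := by
  simpa only [nadd_comm a] using nadd_lt_nadd_right h a

theorem nadd_le_nadd {a a' b b' : Ordinal.{u}} (ha : a ≤ a') (hb : b ≤ b') :
    a ♯ b ≤ a' ♯ b' :=
  ((StrictMono.monotone fun _ _ h => nadd_lt_nadd_right h b) ha).trans
    ((StrictMono.monotone fun _ _ h => nadd_lt_nadd_left a' h) hb)

theorem add_one_nadd (a b : Ordinal.{u}) : (a + 1) ♯ b = a ♯ b + 1 := by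
  induction b using WellFoundedLT.induction with
  | _ b ih =>
  refine le_antisymm ?_ (Order.add_one_le_of_lt (nadd_lt_nadd_right (lt_add_one a) b))
  conv_lhs => rw [nadd]
  simp only [Order.succ_eq_add_one]
  refine max_le (ciSup_le' fun x => ?_) (ciSup_le' fun y => ?_)
  · exact add_le_add_left (nadd_le_nadd (Order.lt_add_one_iff.mp x.2) le_rfl) 1
  · rw [ih y.1 y.2]
    exact add_le_add_left (Order.add_one_le_of_lt (nadd_lt_nadd_left a y.2)) 1

theorem nadd_add_one (a b : Ordinal.{u}) : a ♯ (b + 1) = a ♯ b + 1 := by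
  rw [nadd_comm, add_one_nadd, nadd_comm]

end Ordinal

section optDeriv

variable {X : Type} [TopologicalSpace X] (𝒞 : Set (Set X))

theorem optDeriv_zero : optDeriv 𝒞 0 = Set.univ := by
  rw [optDeriv, Ordinal.limitRecOn_zero]

theorem optDeriv_add_one (ν : Ordinal.{0}) :
    optDeriv 𝒞 (ν + 1) =
      optDeriv 𝒞 ν \ ⋃₀ {U : Set X | IsOpen U ∧ ∃ C ∈ 𝒞, optDeriv 𝒞 ν ∩ U ⊆ C} := by
  rw [optDeriv, Ordinal.limitRecOn_add_one]
  rfl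

theorem optDeriv_limit {ν : Ordinal.{0}} (h : Order.IsSuccLimit ν) :
    optDeriv 𝒞 ν = ⋂ μ : {μ : Ordinal.{0} // μ < ν}, optDeriv 𝒞 μ.1 := by
  rw [optDeriv, Ordinal.limitRecOn_limit _ _ _ _ h]
  rfl

theorem disjoint_optDeriv_add_one {ν : Ordinal.{0}} {U C : Set X} (hU : IsOpen U) (hC : C ∈ 𝒞)
    (hCU : optDeriv 𝒞 ν ∩ U ⊆ C) : Disjoint (optDeriv 𝒞 (ν + 1)) U := by
  rw [optDeriv_add_one, Set.disjoint_left]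
  exact fun y hy hyU => hy.2 ⟨U, ⟨hU, C, hC, hCU⟩, hyU⟩

theorem optDeriv_antitone : Antitone (optDeriv 𝒞) := by
  intro α β hαβ
  induction β using Ordinal.limitRecOn with
  | zero => rw [nonpos_iff_eq_zero.mp hαβ]
  | add_one b ih =>
    rcases hαβ.eq_or_lt with rfl | hαβ
    · exact le_rfl
    rw [optDeriv_add_one]
    exact Set.sdiff_subset.trans (ih (Order.lt_add_one_iff.mp hαβ))
  | limit β hβ ih =>
    rcases hαβ.eq_or_lt with rfl | hαβ
    · exact le_rfl
    rw [optDeriv_limit 𝒞 hβ]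
    exact Set.iInter_subset_of_subset ⟨α, hαβ⟩ le_rfl

theorem exists_lt_of_notMem_optDeriv {ν : Ordinal.{0}} {x : X} (hx : x ∉ optDeriv 𝒞 ν) :
    ∃ ν₁ < ν, ∃ U, IsOpen U ∧ x ∈ U ∧ ∃ C ∈ 𝒞, optDeriv 𝒞 ν₁ ∩ U ⊆ C := by
  induction ν using Ordinal.limitRecOn with
  | zero => exact absurd (optDeriv_zero 𝒞 ▸ Set.mem_univ x) hx
  | add_one b ih =>
    by_cases hb : x ∈ optDeriv 𝒞 b
    · obtain ⟨U, ⟨hU, C, hC, hCU⟩, hxU⟩ :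
          x ∈ ⋃₀ {U : Set X | IsOpen U ∧ ∃ C ∈ 𝒞, optDeriv 𝒞 b ∩ U ⊆ C} := by
        rw [optDeriv_add_one] at hx
        exact not_not.mp fun h => hx ⟨hb, h⟩
      exact ⟨b, lt_add_one b, U, hU, hxU, C, hC, hCU⟩
    · obtain ⟨ν₁, hν₁, h⟩ := ih hb
      exact ⟨ν₁, hν₁.trans (lt_add_one b), h⟩
  | limit ν hν ih =>
    rw [optDeriv_limit 𝒞 hν, Set.mem_iInter, not_forall] at hx
    obtain ⟨⟨b, hb⟩, hxb⟩ := hx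
    obtain ⟨ν₁, hν₁, h⟩ := ih b hb hxb
    exact ⟨ν₁, hν₁.trans hb, h⟩

end optDeriv

theorem optDeriv_inter_nadd_subset {X : Type} [TopologicalSpace X] (𝒞 𝒟 : Set (Set X))
    (ν μ : Ordinal.{0}) :
    optDeriv {s : Set X | ∃ C ∈ 𝒞, ∃ D ∈ 𝒟, s = C ∩ D} (ν ♯ μ) ⊆
      optDeriv 𝒞 ν ∪ optDeriv 𝒟 μ := by
  set 𝒬 := {s : Set X | ∃ C ∈ 𝒞, ∃ D ∈ 𝒟, s = C ∩ D}
  induction ν using WellFoundedLT.induction generalizing μ with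
  | _ ν ihν =>
  induction μ using WellFoundedLT.induction with
  | _ μ ihμ =>
  intro x hx
  by_contra hxPR
  rw [Set.mem_union, not_or] at hxPR
  obtain ⟨ν₁, hν₁, U, hU, hxU, C, hC, hCU⟩ := exists_lt_of_notMem_optDeriv 𝒞 hxPR.1
  obtain ⟨μ₁, hμ₁, V, hV, hxV, D, hD, hDV⟩ := exists_lt_of_notMem_optDeriv 𝒟 hxPR.2
  have hQ₁ : optDeriv 𝒬 (ν₁ ♯ μ₁ + 1) ⊆ optDeriv 𝒞 (ν₁ + 1) ∪ optDeriv 𝒟 μ₁ := by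
    rw [← Ordinal.add_one_nadd]
    rcases (Order.add_one_le_of_lt hν₁).eq_or_lt with hν | hν
    · exact hν ▸ ihμ μ₁ hμ₁
    · exact ihν _ hν μ₁
  have hQ₂ : optDeriv 𝒬 (ν₁ ♯ μ₁ + 1) ⊆ optDeriv 𝒞 ν₁ ∪ optDeriv 𝒟 (μ₁ + 1) := by
    rw [← Ordinal.nadd_add_one]
    exact ihν ν₁ hν₁ _
  have hle : ν₁ ♯ μ₁ + 1 + 1 ≤ ν ♯ μ := by
    rw [← Ordinal.nadd_add_one, ← Ordinal.add_one_nadd]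
    exact Ordinal.nadd_le_nadd (Order.add_one_le_of_lt hν₁) (Order.add_one_le_of_lt hμ₁)
  have hQUV : optDeriv 𝒬 (ν₁ ♯ μ₁ + 1) ∩ (U ∩ V) ⊆ C ∩ D := by
    rintro y ⟨hyQ, hyU, hyV⟩
    constructor
    · rcases hQ₂ hyQ with hy | hy
      · exact hCU ⟨hy, hyU⟩
      · exact absurd hyV (Set.disjoint_left.mp (disjoint_optDeriv_add_one 𝒟 hV hD hDV) hy)
    · rcases hQ₁ hyQ with hy | hy
      · exact absurd hyU (Set.disjoint_left.mp (disjoint_optDeriv_add_one 𝒞 hU hC hCU) hy)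
      · exact hDV ⟨hy, hyV⟩
  exact Set.disjoint_left.mp (disjoint_optDeriv_add_one 𝒬 (hU.inter hV) ⟨C, hC, D, hD, rfl⟩ hQUV)
    (optDeriv_antitone 𝒬 hle hx) ⟨hxU, hxV⟩

open scoped NaturalOps in
theorem optDeriv_inter_nadd_general {X : Type} [MetricSpace X]
    (𝒞 𝒟 : Set (Set X)) (ν μ : Ordinal.{0}) :
    optDeriv {s : Set X | ∃ C ∈ 𝒞, ∃ D ∈ 𝒟, s = C ∩ D} (ν ♯ μ) ⊆
      optDeriv 𝒞 ν ∪ optDeriv 𝒟 μ :=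
  optDeriv_inter_nadd_subset 𝒞 𝒟 ν μ

open scoped NaturalOps in
/-- For families `𝒞, 𝒟` of subsets of a compact metric space `X`, with optimal
derivation sequences `P^ν_𝒞`, `P^μ_𝒟`, and `Q^ν` the optimal derivation sequence for
`{C ∩ D : C ∈ 𝒞, D ∈ 𝒟}`, we have `Q^{ν # μ} ⊆ P^ν_𝒞 ∪ P^μ_𝒟` (natural sum). -/
theorem optDeriv_inter_nadd {X : Type} [MetricSpace X] [CompactSpace X]
    (𝒞 𝒟 : Set (Set X)) (ν μ : Ordinal.{0}) :
    optDeriv {s : Set X | ∃ C ∈ 𝒞, ∃ D ∈ 𝒟, s = C ∩ D} (ν ♯ μ) ⊆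
      optDeriv 𝒞 ν ∪ optDeriv 𝒟 μ :=
  optDeriv_inter_nadd_general 𝒞 𝒟 ν μ
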